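/- For every n ≥ 1 there exist vectors x_1,…,x_n ∈ c00 such that, setting x = Σ_{j=1}^n x_j: (1) ‖x_j‖_1 = 1/2 for all j = 1,…,n; (2) ‖x‖_1 ≤ 1; (3) ‖x‖_2 ≥ n/4. Consequently, sup{ ‖x‖_2 / ‖x‖_1 : x ∈ c00, x ≠ 0 } = ∞. -/

import Mathlib

/-- The ℓ¹-norm on `c00 = ℕ →₀ ℝ`. -/
noncomputable def l1 (x : ℕ →₀ ℝ) : ℝ := ∑ n ∈ x.support, |x n|

/-- `restr E x = Ex`, the restriction of `x` to the finite set `E`. -/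
noncomputable def restr (E : Finset ℕ) (x : ℕ →₀ ℝ) : ℕ →₀ ℝ :=
  x.filter (fun n => n ∈ E)

/-- `Admissible n Es` says that `E_1, …, E_n` are finite nonempty subsets of ℕ
with `n ≤ E_1 < E_2 < ⋯ < E_n`. -/
def Admissible (n : ℕ) (Es : Fin n → Finset ℕ) : Prop :=
  0 < n ∧ (∀ i, (Es i).Nonempty) ∧
    (∀ i : Fin n, ∀ a ∈ Es i, n ≤ a) ∧
    (∀ i j : Fin n, i < j → ∀ a ∈ Es i, ∀ b ∈ Es j, a < b)

/-- The Tsirelson iterate norms `‖·‖_k`. -/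
noncomputable def tsir : ℕ → (ℕ →₀ ℝ) → ℝ
  | 0, x => ⨆ n, |x n|
  | (k + 1), x => max (tsir k x)
      (sSup { r : ℝ | ∃ n : ℕ, ∃ Es : Fin n → Finset ℕ, Admissible n Es ∧
        r = (1 / 2) * ∑ i, tsir k (restr (Es i) x) })

/-!
Take the dyadic blocks `x_j = 2^{-(n+j)} 1_{[2^{n+j}, 2^{n+j+1})}`, `j < n`. Each has ℓ¹-norm `1`,
so `‖x_j‖_1 ≤ 1/2`, and the `2^{n+j}` singletons of its support form an admissible family, so
`‖x_j‖_1 = 1/2`. Their sum `x` satisfies `|x_k| ≤ 2/k`, so on an admissible family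
`m ≤ E_1 < ⋯ < E_m` each `‖E_i x‖_0` is at most `2/m`, whence `‖x‖_1 ≤ 1`; while the `n` blocks
themselves form an admissible family (as `n < 2^n`), so `‖x‖_2 ≥ n/4`.
-/

open Finset Function

section Tsirelson

variable {x : ℕ →₀ ℝ}

lemma l1_nonneg (x : ℕ →₀ ℝ) : 0 ≤ l1 x :=
  sum_nonneg fun _ _ => abs_nonneg _

lemma abs_apply_le_l1 (x : ℕ →₀ ℝ) (k : ℕ) : |x k| ≤ l1 x := by
  by_cases h : x k = 0
  · simpa [h] using l1_nonneg x
  · exact single_le_sum (f := fun k => |x k|) (fun _ _ => abs_nonneg _)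
      (Finsupp.mem_support_iff.mpr h)

lemma restr_apply (E : Finset ℕ) (x : ℕ →₀ ℝ) (k : ℕ) :
    restr E x k = if k ∈ E then x k else 0 :=
  Finsupp.filter_apply _ _ _

lemma l1_restr (E : Finset ℕ) (x : ℕ →₀ ℝ) :
    l1 (restr E x) = ∑ k ∈ x.support with k ∈ E, |x k| := by
  rw [l1, restr, Finsupp.support_filter]
  refine sum_congr rfl fun k hk => ?_
  rw [← restr, restr_apply, if_pos (mem_filter.mp hk).2]

lemma sum_l1_restr_le {m : ℕ} {Es : Fin m → Finset ℕ} (hEs : Pairwise (Disjoint on Es))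
    (x : ℕ →₀ ℝ) : ∑ i, l1 (restr (Es i) x) ≤ l1 x := by
  classical
  simp only [l1_restr]
  rw [← sum_biUnion (s := univ) (t := fun i => {k ∈ x.support | k ∈ Es i})
    fun i _ j _ hij => disjoint_left.mpr fun k hki hkj =>
      disjoint_left.mp (hEs hij) (mem_filter.mp hki).2 (mem_filter.mp hkj).2]
  exact sum_le_sum_of_subset_of_nonneg (biUnion_subset.mpr fun i _ => filter_subset _ _)
    fun _ _ _ => abs_nonneg _

lemma Admissible.pairwise_disjoint {m : ℕ} {Es : Fin m → Finset ℕ} (hEs : Admissible m Es) :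
    Pairwise (Disjoint on Es) := by
  intro i j hij
  rw [onFun, disjoint_left]
  intro a hai haj
  rcases lt_or_gt_of_ne hij with h | h
  · exact lt_irrefl a (hEs.2.2.2 i j h a hai a haj)
  · exact lt_irrefl a (hEs.2.2.2 j i h a haj a hai)

lemma tsir_zero_le {c : ℝ} (h : ∀ k, |x k| ≤ c) : tsir 0 x ≤ c :=
  ciSup_le h

lemma abs_apply_le_tsir_zero (x : ℕ →₀ ℝ) (k : ℕ) : |x k| ≤ tsir 0 x :=
  le_ciSup ⟨l1 x, by rintro r ⟨k, rfl⟩; exact abs_apply_le_l1 x k⟩ k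

lemma tsir_succ_le {k : ℕ} {c : ℝ} (hc : 0 ≤ c) (h₀ : tsir k x ≤ c)
    (h₁ : ∀ (m : ℕ) (Es : Fin m → Finset ℕ), Admissible m Es →
      1 / 2 * ∑ i, tsir k (restr (Es i) x) ≤ c) :
    tsir (k + 1) x ≤ c := by
  refine max_le h₀ (Real.sSup_le ?_ hc)
  rintro r ⟨m, Es, hEs, rfl⟩
  exact h₁ m Es hEs

lemma tsir_le_l1 (k : ℕ) (x : ℕ →₀ ℝ) : tsir k x ≤ l1 x := by
  induction k generalizing x with
  | zero => exact tsir_zero_le (abs_apply_le_l1 x)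
  | succ k ih =>
    refine tsir_succ_le (l1_nonneg x) (ih x) fun m Es hEs => ?_
    have := (sum_le_sum fun i _ => ih (restr (Es i) x)).trans
      (sum_l1_restr_le hEs.pairwise_disjoint x)
    linarith [l1_nonneg x]

lemma Admissible.sum_tsir_restr_le_l1 {k m : ℕ} {Es : Fin m → Finset ℕ}
    (hEs : Admissible m Es) (x : ℕ →₀ ℝ) : ∑ i, tsir k (restr (Es i) x) ≤ l1 x :=
  (sum_le_sum fun _ _ => tsir_le_l1 k _).trans (sum_l1_restr_le hEs.pairwise_disjoint x)

lemma Admissible.half_sum_le_tsir_succ {k m : ℕ} {Es : Fin m → Finset ℕ}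
    (hEs : Admissible m Es) (x : ℕ →₀ ℝ) :
    1 / 2 * ∑ i, tsir k (restr (Es i) x) ≤ tsir (k + 1) x := by
  rw [tsir]
  refine le_max_of_le_right (le_csSup ⟨l1 x / 2, ?_⟩ ⟨m, Es, hEs, rfl⟩)
  rintro r ⟨m', Es', hEs', rfl⟩
  linarith [hEs'.sum_tsir_restr_le_l1 (k := k) x]

lemma tsir_succ_le_max_l1 (k : ℕ) (x : ℕ →₀ ℝ) :
    tsir (k + 1) x ≤ max (tsir k x) (l1 x / 2) := by
  refine tsir_succ_le ?_ (le_max_left _ _) fun m Es hEs => le_max_of_le_right ?_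
  · exact le_max_of_le_right (by linarith [l1_nonneg x])
  · linarith [hEs.sum_tsir_restr_le_l1 (k := k) x]

lemma tsir_le_tsir_succ (k : ℕ) (x : ℕ →₀ ℝ) : tsir k x ≤ tsir (k + 1) x :=
  le_max_left _ _

lemma tsir_pos (k : ℕ) (hx : x ≠ 0) : 0 < tsir k x := by
  induction k with
  | zero =>
    obtain ⟨n, hn⟩ := Finsupp.ne_iff.mp hx
    exact (abs_pos.mpr hn).trans_le (abs_apply_le_tsir_zero x n)
  | succ k ih => exact ih.trans_le (tsir_le_tsir_succ k x)

lemma ne_zero_of_tsir_pos {k : ℕ} (h : 0 < tsir k x) : x ≠ 0 := by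
  rintro rfl
  simpa [l1] using h.trans_le (tsir_le_l1 k 0)

lemma admissible_singletons {m : ℕ} (hm : 0 < m) : Admissible m fun i => {m + i.val} := by
  refine ⟨hm, fun i => singleton_nonempty _, ?_, ?_⟩
  · intro i a ha
    rw [mem_singleton.mp ha]
    omega
  · intro i j hij a ha b hb
    rw [mem_singleton.mp ha, mem_singleton.mp hb]
    exact Nat.add_lt_add_left hij m

lemma half_sum_abs_le_tsir_one {m : ℕ} (hm : 0 < m) (x : ℕ →₀ ℝ) :
    1 / 2 * ∑ i : Fin m, |x (m + i)| ≤ tsir 1 x := by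
  refine le_of_eq_of_le ?_ ((admissible_singletons hm).half_sum_le_tsir_succ x)
  congr 1
  refine sum_congr rfl fun i _ => le_antisymm ?_ ?_
  · refine (abs_apply_le_tsir_zero _ (m + i)).trans_eq' ?_
    rw [restr_apply, if_pos (mem_singleton_self _)]
  · refine tsir_zero_le fun k => ?_
    rw [restr_apply]
    split_ifs with hk
    · rw [mem_singleton.mp hk]
    · simp

lemma tsir_one_le {c : ℝ} (h₀ : ∀ k, |x k| ≤ c) (h₁ : ∀ k, |x k| ≤ 2 * c / k) :
    tsir 1 x ≤ c := by
  have hc : 0 ≤ c := (abs_nonneg _).trans (h₀ 0)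
  refine tsir_succ_le hc (tsir_zero_le h₀) fun m Es hEs => ?_
  have hm : (0 : ℝ) < m := Nat.cast_pos.mpr hEs.1
  have hterm : ∀ i, tsir 0 (restr (Es i) x) ≤ 2 * c / m := fun i => tsir_zero_le fun k => by
    rw [restr_apply]
    split_ifs with hk
    · exact (h₁ k).trans (div_le_div_of_nonneg_left (by positivity) hm
        (Nat.cast_le.mpr (hEs.2.2.1 i k hk)))
    · rw [abs_zero]; positivity
  calc 1 / 2 * ∑ i, tsir 0 (restr (Es i) x) ≤ 1 / 2 * ∑ _i : Fin m, 2 * c / m := by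
        gcongr with i; exact hterm i
    _ = c := by simp only [sum_const, card_univ, Fintype.card_fin, nsmul_eq_mul]; field_simp

end Tsirelson

section DyadicBlock

noncomputable def dyadicBlock (a : ℕ) : ℕ →₀ ℝ :=
  Finsupp.indicator (Ico (2 ^ a) (2 ^ (a + 1))) fun _ _ => ((2 : ℝ) ^ a)⁻¹

lemma dyadicBlock_apply (a k : ℕ) :
    dyadicBlock a k = if k ∈ Ico (2 ^ a) (2 ^ (a + 1)) then ((2 : ℝ) ^ a)⁻¹ else 0 := by
  classical
  rw [dyadicBlock, Finsupp.indicator_apply, dite_eq_ite]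

lemma log_eq_of_mem_Ico_two_pow {a k : ℕ} (hk : k ∈ Ico (2 ^ a) (2 ^ (a + 1))) :
    Nat.log 2 k = a :=
  Nat.log_eq_of_pow_le_of_lt_pow (mem_Ico.mp hk).1 (mem_Ico.mp hk).2

lemma dyadicBlock_apply_nonneg (a k : ℕ) : 0 ≤ dyadicBlock a k := by
  rw [dyadicBlock_apply]; split_ifs <;> positivity

lemma dyadicBlock_apply_le_one (a k : ℕ) : dyadicBlock a k ≤ 1 := by
  rw [dyadicBlock_apply]
  split_ifs
  · exact inv_le_one_of_one_le₀ (one_le_pow₀ one_le_two)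
  · exact zero_le_one

lemma dyadicBlock_apply_le_two_div (a k : ℕ) : dyadicBlock a k ≤ 2 / k := by
  rw [dyadicBlock_apply]
  split_ifs with hk
  · have hk' : (k : ℝ) < 2 ^ a * 2 := by exact_mod_cast pow_succ 2 a ▸ (mem_Ico.mp hk).2
    have hk₀ : (2 : ℝ) ^ a ≤ k := by exact_mod_cast (mem_Ico.mp hk).1
    rw [inv_le_iff_one_le_mul₀ (by positivity), div_mul_eq_mul_div,
      le_div_iff₀ (hk₀.trans_lt' (by positivity))]
    linarith
  · positivity

lemma l1_dyadicBlock (a : ℕ) : l1 (dyadicBlock a) = 1 := by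
  classical
  have hsupp : (dyadicBlock a).support = Ico (2 ^ a) (2 ^ (a + 1)) := by
    ext k
    rw [Finsupp.mem_support_iff, dyadicBlock_apply]
    split_ifs with hk <;> simp [hk]
  rw [l1, hsupp, sum_congr rfl fun k hk => by
      rw [dyadicBlock_apply, if_pos hk, abs_of_pos (by positivity)],
    sum_const, Nat.card_Ico, pow_succ, Nat.mul_two, Nat.add_sub_cancel, nsmul_eq_mul]
  push_cast
  exact mul_inv_cancel₀ (by positivity)

lemma tsir_one_dyadicBlock {a : ℕ} (ha : 1 ≤ a) : tsir 1 (dyadicBlock a) = 1 / 2 := by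
  apply le_antisymm
  · refine (tsir_succ_le_max_l1 0 _).trans (max_le (tsir_zero_le fun k => ?_) ?_)
    · rw [abs_of_nonneg (dyadicBlock_apply_nonneg a k), dyadicBlock_apply]
      split_ifs
      · rw [one_div, inv_le_inv₀ (by positivity) two_pos]
        exact le_self_pow₀ one_le_two (by omega)
      · exact one_half_pos.le
    · rw [l1_dyadicBlock]
  · have hterm (i : Fin (2 ^ a)) : |dyadicBlock a (2 ^ a + i)| = ((2 : ℝ) ^ a)⁻¹ := by
      rw [dyadicBlock_apply, if_pos (by rw [mem_Ico, pow_succ]; omega), abs_of_pos (by positivity)]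
    refine le_of_eq_of_le ?_ (half_sum_abs_le_tsir_one (Nat.two_pow_pos a) _)
    rw [sum_congr rfl fun i _ => hterm i, sum_const, card_univ, Fintype.card_fin, nsmul_eq_mul]
    push_cast
    rw [mul_inv_cancel₀ (by positivity), mul_one]

lemma dyadicBlock_apply_eq_zero_of_log_ne {a k : ℕ} (h : Nat.log 2 k ≠ a) :
    dyadicBlock a k = 0 := by
  rw [dyadicBlock_apply, if_neg (mt log_eq_of_mem_Ico_two_pow h)]

lemma sum_dyadicBlock_apply (A : Finset ℕ) (k : ℕ) :
    (∑ a ∈ A, dyadicBlock a) k = if Nat.log 2 k ∈ A then dyadicBlock (Nat.log 2 k) k else 0 := by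
  rw [Finsupp.finsetSum_apply, ← sum_ite_eq A (Nat.log 2 k) fun a => dyadicBlock a k]
  refine sum_congr rfl fun a _ => ?_
  split_ifs with h
  · rfl
  · exact dyadicBlock_apply_eq_zero_of_log_ne h

lemma exists_abs_sum_dyadicBlock_apply_le (A : Finset ℕ) (k : ℕ) :
    ∃ a, |(∑ b ∈ A, dyadicBlock b) k| ≤ dyadicBlock a k := by
  refine ⟨Nat.log 2 k, ?_⟩
  rw [sum_dyadicBlock_apply]
  split_ifs
  · exact (abs_of_nonneg (dyadicBlock_apply_nonneg _ _)).le
  · rw [abs_zero]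
    exact dyadicBlock_apply_nonneg _ _

lemma tsir_one_sum_dyadicBlock_le (A : Finset ℕ) : tsir 1 (∑ a ∈ A, dyadicBlock a) ≤ 1 := by
  refine tsir_one_le (fun k => ?_) fun k => ?_ <;>
    obtain ⟨a, ha⟩ := exists_abs_sum_dyadicBlock_apply_le A k
  · exact ha.trans (dyadicBlock_apply_le_one a k)
  · rw [mul_one]
    exact ha.trans (dyadicBlock_apply_le_two_div a k)

lemma restr_sum_dyadicBlock {A : Finset ℕ} {a : ℕ} (ha : a ∈ A) :
    restr (Ico (2 ^ a) (2 ^ (a + 1))) (∑ b ∈ A, dyadicBlock b) = dyadicBlock a := by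
  ext k
  rw [restr_apply, sum_dyadicBlock_apply]
  by_cases hk : k ∈ Ico (2 ^ a) (2 ^ (a + 1))
  · rw [if_pos hk, log_eq_of_mem_Ico_two_pow hk, if_pos ha]
  · rw [if_neg hk, dyadicBlock_apply, if_neg hk]

lemma admissible_Ico_two_pow {n : ℕ} (hn : 0 < n) :
    Admissible n fun j : Fin n => Ico (2 ^ (n + j)) (2 ^ (n + j + 1)) := by
  refine ⟨hn, fun j => nonempty_Ico.mpr (Nat.pow_lt_pow_succ one_lt_two), ?_, ?_⟩
  · intro j a ha
    have : 2 ^ n ≤ 2 ^ (n + j) := Nat.pow_le_pow_right two_pos (Nat.le_add_right _ _)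
    have := (mem_Ico.mp ha).1
    have : n < 2 ^ n := Nat.lt_two_pow_self
    omega
  · intro i j hij a ha b hb
    have : 2 ^ (n + i + 1) ≤ 2 ^ (n + j) :=
      Nat.pow_le_pow_right two_pos (by have := Fin.lt_def.mp hij; omega)
    have := (mem_Ico.mp ha).2
    have := (mem_Ico.mp hb).1
    omega

lemma tsir_two_sum_dyadicBlock_ge {n : ℕ} (hn : 0 < n) :
    (n : ℝ) / 4 ≤ tsir 2 (∑ a ∈ Ico n (2 * n), dyadicBlock a) := by
  refine le_of_eq_of_le ?_ ((admissible_Ico_two_pow hn).half_sum_le_tsir_succ _)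
  have hblock (j : Fin n) : tsir 1 (restr (Ico (2 ^ (n + j)) (2 ^ (n + j + 1)))
      (∑ a ∈ Ico n (2 * n), dyadicBlock a)) = 1 / 2 := by
    rw [restr_sum_dyadicBlock (mem_Ico.mpr ⟨by omega, by omega⟩), tsir_one_dyadicBlock (by omega)]
  rw [sum_congr rfl fun j _ => hblock j, sum_const, card_univ, Fintype.card_fin, nsmul_eq_mul]
  ring

lemma sum_fin_dyadicBlock (n : ℕ) :
    ∑ j : Fin n, dyadicBlock (n + j) = ∑ a ∈ Ico n (2 * n), dyadicBlock a := by
  rw [Fin.sum_univ_eq_sum_range (fun j => dyadicBlock (n + j)), sum_Ico_eq_sum_range, two_mul,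
    Nat.add_sub_cancel]

end DyadicBlock

/-- for every `n ≥ 1` there are `x_1, …, x_n ∈ c00` with `‖x_j‖_1 = 1/2`,
`‖Σ x_j‖_1 ≤ 1` and `‖Σ x_j‖_2 ≥ n/4`; consequently
`sup { ‖x‖_2 / ‖x‖_1 : x ∈ c00, x ≠ 0 } = ∞`. -/
theorem tsir_two_over_one_unbounded :
    (∀ n : ℕ, 1 ≤ n → ∃ x : Fin n → (ℕ →₀ ℝ),
      (∀ j, tsir 1 (x j) = 1 / 2) ∧
      tsir 1 (∑ j, x j) ≤ 1 ∧
      (n : ℝ) / 4 ≤ tsir 2 (∑ j, x j)) ∧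
    (∀ C : ℝ, ∃ x : ℕ →₀ ℝ, x ≠ 0 ∧ C < tsir 2 x / tsir 1 x) := by
  have blocks : ∀ n : ℕ, 1 ≤ n → ∃ x : Fin n → (ℕ →₀ ℝ),
      (∀ j, tsir 1 (x j) = 1 / 2) ∧
      tsir 1 (∑ j, x j) ≤ 1 ∧
      (n : ℝ) / 4 ≤ tsir 2 (∑ j, x j) := fun n hn =>
    ⟨fun j => dyadicBlock (n + j), fun j => tsir_one_dyadicBlock (by omega),
      sum_fin_dyadicBlock n ▸ tsir_one_sum_dyadicBlock_le _,
      sum_fin_dyadicBlock n ▸ tsir_two_sum_dyadicBlock_ge hn⟩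
  refine ⟨blocks, fun C => ?_⟩
  obtain ⟨n, hn⟩ := exists_nat_gt (max (4 * C) 0)
  obtain ⟨x, -, hx₁, hx₂⟩ := blocks n (Nat.cast_pos.mp ((le_max_right _ _).trans_lt hn))
  have hpos : 0 < tsir 2 (∑ j, x j) := by linarith [le_max_right (4 * C) 0]
  have hC : C < tsir 2 (∑ j, x j) := by linarith [le_max_left (4 * C) 0]
  have hx : ∑ j, x j ≠ 0 := ne_zero_of_tsir_pos hpos
  exact ⟨_, hx, hC.trans_le (le_div_self hpos.le (tsir_pos 1 hx) hx₁)⟩
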